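/- arXiv:0810.4530 — 2 statements merged into one kernel-verified Lean document; each statement's English description precedes it below -/
import Mathlib

section
/- The skew-symmetric bilinear bracket on ℝ^8 defined by μ(e_1,e_i) = e_{i+1} for i = 2,…,6, μ(e_2,e_3) = −(1/2) e_5, μ(e_2,e_4) = −(1/2) e_6, μ(e_2,e_5) = −(3/2) e_7, μ(e_3,e_4) = e_7, and μ(e_i, e_{9−i}) = (−1)^{i+1} e_8 for i = 2,3,4 (so μ(e_2,e_7) = −e_8, μ(e_3,e_6) = e_8, μ(e_4,e_5) = −e_8) satisfies the Jacobi identity. -/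
set_option maxHeartbeats 1000000

noncomputable section

def e (k : ℕ) : Fin 8 → ℝ := fun m => if (m : ℕ) = k then 1 else 0

/-- Structure constants of the bracket of `b(8)` for `i < j` (0-based indices):
`μ(e₁,e_i) = e_{i+1}` for `i = 2,…,6`, `μ(e₂,e₃) = -(1/2)e₅`, `μ(e₂,e₄) = -(1/2)e₆`,
`μ(e₂,e₅) = -(3/2)e₇`, `μ(e₃,e₄) = e₇`, `μ(e₂,e₇) = -e₈`, `μ(e₃,e₆) = e₈`,
`μ(e₄,e₅) = -e₈`. -/
def cplus (i j : ℕ) : Fin 8 → ℝ :=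
  if i = 0 ∧ 1 ≤ j ∧ j ≤ 5 then e (j + 1)
  else if i = 1 ∧ j = 2 then (-(1 / 2 : ℝ)) • e 4
  else if i = 1 ∧ j = 3 then (-(1 / 2 : ℝ)) • e 5
  else if i = 1 ∧ j = 4 then (-(3 / 2 : ℝ)) • e 6
  else if i = 2 ∧ j = 3 then e 6
  else if i = 1 ∧ j = 6 then -e 7
  else if i = 2 ∧ j = 5 then e 7
  else if i = 3 ∧ j = 4 then -e 7
  else 0

def cst (i j : ℕ) : Fin 8 → ℝ :=
  if i < j then cplus i j else if j < i then -cplus j i else 0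

/-- The bracket of the algebra `b(8)` of class `B₂`. -/
def mu (x y : Fin 8 → ℝ) : Fin 8 → ℝ :=
  fun k => ∑ i : Fin 8, ∑ j : Fin 8, x i * y j * cst (i : ℕ) (j : ℕ) k


lemma vmk0 (a0 a1 a2 a3 a4 a5 a6 a7 : ℝ) (h : (0:ℕ) < 8) :
    ![a0,a1,a2,a3,a4,a5,a6,a7] ⟨0,h⟩ = a0 := rfl
lemma vlit0 (a0 a1 a2 a3 a4 a5 a6 a7 : ℝ) :
    ![a0,a1,a2,a3,a4,a5,a6,a7] (0 : Fin 8) = a0 := rfl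
lemma vmk1 (a0 a1 a2 a3 a4 a5 a6 a7 : ℝ) (h : (1:ℕ) < 8) :
    ![a0,a1,a2,a3,a4,a5,a6,a7] ⟨1,h⟩ = a1 := rfl
lemma vlit1 (a0 a1 a2 a3 a4 a5 a6 a7 : ℝ) :
    ![a0,a1,a2,a3,a4,a5,a6,a7] (1 : Fin 8) = a1 := rfl
lemma vmk2 (a0 a1 a2 a3 a4 a5 a6 a7 : ℝ) (h : (2:ℕ) < 8) :
    ![a0,a1,a2,a3,a4,a5,a6,a7] ⟨2,h⟩ = a2 := rfl
lemma vlit2 (a0 a1 a2 a3 a4 a5 a6 a7 : ℝ) :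
    ![a0,a1,a2,a3,a4,a5,a6,a7] (2 : Fin 8) = a2 := rfl
lemma vmk3 (a0 a1 a2 a3 a4 a5 a6 a7 : ℝ) (h : (3:ℕ) < 8) :
    ![a0,a1,a2,a3,a4,a5,a6,a7] ⟨3,h⟩ = a3 := rfl
lemma vlit3 (a0 a1 a2 a3 a4 a5 a6 a7 : ℝ) :
    ![a0,a1,a2,a3,a4,a5,a6,a7] (3 : Fin 8) = a3 := rfl
lemma vmk4 (a0 a1 a2 a3 a4 a5 a6 a7 : ℝ) (h : (4:ℕ) < 8) :
    ![a0,a1,a2,a3,a4,a5,a6,a7] ⟨4,h⟩ = a4 := rfl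
lemma vlit4 (a0 a1 a2 a3 a4 a5 a6 a7 : ℝ) :
    ![a0,a1,a2,a3,a4,a5,a6,a7] (4 : Fin 8) = a4 := rfl
lemma vmk5 (a0 a1 a2 a3 a4 a5 a6 a7 : ℝ) (h : (5:ℕ) < 8) :
    ![a0,a1,a2,a3,a4,a5,a6,a7] ⟨5,h⟩ = a5 := rfl
lemma vlit5 (a0 a1 a2 a3 a4 a5 a6 a7 : ℝ) :
    ![a0,a1,a2,a3,a4,a5,a6,a7] (5 : Fin 8) = a5 := rfl
lemma vmk6 (a0 a1 a2 a3 a4 a5 a6 a7 : ℝ) (h : (6:ℕ) < 8) :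
    ![a0,a1,a2,a3,a4,a5,a6,a7] ⟨6,h⟩ = a6 := rfl
lemma vlit6 (a0 a1 a2 a3 a4 a5 a6 a7 : ℝ) :
    ![a0,a1,a2,a3,a4,a5,a6,a7] (6 : Fin 8) = a6 := rfl
lemma vmk7 (a0 a1 a2 a3 a4 a5 a6 a7 : ℝ) (h : (7:ℕ) < 8) :
    ![a0,a1,a2,a3,a4,a5,a6,a7] ⟨7,h⟩ = a7 := rfl
lemma vlit7 (a0 a1 a2 a3 a4 a5 a6 a7 : ℝ) :
    ![a0,a1,a2,a3,a4,a5,a6,a7] (7 : Fin 8) = a7 := rfl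

lemma mu_eq (x y : Fin 8 → ℝ) : mu x y =
    ![0, 0,
      x 0 * y 1 - x 1 * y 0,
      x 0 * y 2 - x 2 * y 0,
      x 0 * y 3 - x 3 * y 0 - (1/2) * (x 1 * y 2 - x 2 * y 1),
      x 0 * y 4 - x 4 * y 0 - (1/2) * (x 1 * y 3 - x 3 * y 1),
      x 0 * y 5 - x 5 * y 0 - (3/2) * (x 1 * y 4 - x 4 * y 1) + (x 2 * y 3 - x 3 * y 2),
      -(x 1 * y 6 - x 6 * y 1) + (x 2 * y 5 - x 5 * y 2) - (x 3 * y 4 - x 4 * y 3)] := by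
  funext k
  fin_cases k <;>
  · simp (config := { decide := true }) only [mu, Fin.sum_univ_eight, cst, cplus, e, ite_apply,
      Pi.neg_apply, Pi.smul_apply, Pi.zero_apply, reduceIte, Fin.isValue, Fin.val_zero,
      Fin.val_one, smul_eq_mul, show ((2:Fin 8):ℕ)=2 from rfl, show ((3:Fin 8):ℕ)=3 from rfl,
      show ((4:Fin 8):ℕ)=4 from rfl, show ((5:Fin 8):ℕ)=5 from rfl,
      show ((6:Fin 8):ℕ)=6 from rfl, show ((7:Fin 8):ℕ)=7 from rfl,
      vmk0, vmk1, vmk2, vmk3, vmk4, vmk5, vmk6, vmk7, vlit0, vlit1, vlit2, vlit3, vlit4, vlit5, vlit6, vlit7]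
    ring

/-- The bracket of `b(8)` satisfies the Jacobi identity. -/
theorem stmt11 (x y z : Fin 8 → ℝ) :
    mu x (mu y z) + mu y (mu z x) + mu z (mu x y) = 0 := by
  funext k
  simp only [mu_eq, Pi.add_apply, Pi.zero_apply, vmk0, vmk1, vmk2, vmk3, vmk4, vmk5, vmk6, vmk7, vlit0, vlit1, vlit2, vlit3, vlit4, vlit5, vlit6, vlit7]
  fin_cases k <;> · simp only [vmk0, vmk1, vmk2, vmk3, vmk4, vmk5, vmk6, vmk7, vlit0, vlit1, vlit2, vlit3, vlit4, vlit5, vlit6, vlit7]; ring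

end
end

section
/- Let F ⊂ ℝ^8 be the set of 10 vectors {(−1,−1,1,0,0,0,0,0), (−1,0,−1,1,0,0,0,0), (−1,0,0,−1,1,0,0,0), (−1,0,0,0,−1,1,0,0), (−1,0,0,0,0,−1,1,0), (−1,0,0,0,0,0,−1,1), (0,0,−1,−1,0,0,1,0), (0,0,−1,0,−1,0,0,1), (0,−1,0,0,−1,0,1,0), (0,−1,0,0,0,−1,0,1)}, let Y ∈ ℝ^{8×10} be the matrix with these as columns (in this order) and U = Y^T Y ∈ ℝ^{10×10}. Then every solution v ∈ ℝ^{10} of U v = [1]_{10} has fifth coordinate equal to −3/17; in particular there is no solution with all coordinates strictly positive. -/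
noncomputable section

/-- The matrix `Y` whose columns are the 10 root vectors of `g_{-2}(8)`. -/
def Y : Matrix (Fin 8) (Fin 10) ℝ :=
  !![-1,-1,-1,-1,-1,-1, 0, 0, 0, 0;
     -1, 0, 0, 0, 0, 0, 0, 0,-1,-1;
      1,-1, 0, 0, 0, 0,-1,-1, 0, 0;
      0, 1,-1, 0, 0, 0,-1, 0, 0, 0;
      0, 0, 1,-1, 0, 0, 0,-1,-1, 0;
      0, 0, 0, 1,-1, 0, 0, 0, 0,-1;
      0, 0, 0, 0, 1,-1, 1, 0, 1, 0;
      0, 0, 0, 0, 0, 1, 0, 1, 0, 1]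

/-- `U = YᵀY`. -/
def U : Matrix (Fin 10) (Fin 10) ℝ := Y.transpose * Y

set_option maxHeartbeats 1000000 in
/-- Every solution of `U v = [1]₁₀` has fifth coordinate `-3/17`; in particular no
solution has all coordinates strictly positive. -/
theorem stmt15 :
    (∀ v : Fin 10 → ℝ, U.mulVec v = (fun _ => 1) → v 4 = -3 / 17) ∧
    ¬ ∃ v : Fin 10 → ℝ, (∀ i, 0 < v i) ∧ U.mulVec v = (fun _ => 1) := by
  have key : ∀ v : Fin 10 → ℝ, U.mulVec v = (fun _ => 1) → v 4 = -3 / 17 := by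
    intro v hv
    have h := fun i => congrFun hv i
    have h0 := h ((0 : Fin 10))
    have h1 := h (Fin.succ (0 : Fin 9))
    have h2 := h (Fin.succ (Fin.succ (0 : Fin 8)))
    have h3 := h (Fin.succ (Fin.succ (Fin.succ (0 : Fin 7))))
    have h4 := h (Fin.succ (Fin.succ (Fin.succ (Fin.succ (0 : Fin 6)))))
    have h5 := h (Fin.succ (Fin.succ (Fin.succ (Fin.succ (Fin.succ (0 : Fin 5))))))
    have h6 := h (Fin.succ (Fin.succ (Fin.succ (Fin.succ (Fin.succ (Fin.succ (0 : Fin 4)))))))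
    have h7 := h (Fin.succ (Fin.succ (Fin.succ (Fin.succ (Fin.succ (Fin.succ (Fin.succ (0 : Fin 3))))))))
    have h8 := h (Fin.succ (Fin.succ (Fin.succ (Fin.succ (Fin.succ (Fin.succ (Fin.succ (Fin.succ (0 : Fin 2)))))))))
    have h9 := h (Fin.succ (Fin.succ (Fin.succ (Fin.succ (Fin.succ (Fin.succ (Fin.succ (Fin.succ (Fin.succ (0 : Fin 1))))))))))
    simp only [U, Y, Matrix.mulVec, Matrix.mul_apply, dotProduct,
      Matrix.transpose_apply, Fin.sum_univ_succ, Fin.sum_univ_zero, Matrix.cons_val_zero,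
      Matrix.cons_val_succ, Matrix.of_apply, add_zero] at h0 h1 h2 h3 h4 h5 h6 h7 h8 h9
    show v (Fin.succ (Fin.succ (Fin.succ (Fin.succ (0 : Fin 6))))) = -3 / 17
    linear_combination (-52:ℝ)/102 * h0 + (-36:ℝ)/102 * h1 + (5:ℝ)/102 * h2 + (28:ℝ)/102 * h3 + (76:ℝ)/102 * h4 + (4:ℝ)/102 * h5 + (-43:ℝ)/102 * h6
  refine ⟨key, ?_⟩
  rintro ⟨v, hpos, hv⟩
  have h1 := key v hv
  have h2 := hpos 4
  linarith

end
end
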